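/- Let H = {(x,y,z,t) ∈ ℝ⁴ : y²−x² = (x²+y²−2t²)², z = 0, |y| ≤ t ≤ 1}. Then H ∩ {x = 0} = {(0, y, 0, t) : 0 ≤ t ≤ 1 and |y| = (√(1+8t²) − 1)/2}. In particular H ∩ {x = 0} consists of two arcs y = ±g(t) with g(t) = (√(1+8t²) − 1)/2 = 2t² + O(t⁴), so the two branches of H are tangent at the origin. -/

import Mathlib

/-!
On the slice `x = 0` put `a = |y| ≥ 0`. The equation of `H` becomes `a² = (2t² - a²)²`, and
`a ≤ t` makes `2t² - a²` nonnegative, so it reduces to `a² + a = 2t²`, i.e. `(2a + 1)² = 1 + 8t²`,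
whose nonnegative root is `a = (√(1 + 8t²) - 1) / 2`. Conversely `a² + a = 2t²` with `0 ≤ t ≤ 1`
forces `a ≤ t`, since `t² + t ≥ 2t²` there.

For the expansion, `s = √(1 + u)` satisfies `1 + u/2 - s = (s - 1)² / 2` and `0 ≤ s - 1 ≤ u/2`,
so `√(1 + u)` is `1 + u/2` up to `u²/8`; take `u = 8t²`.
-/

open Set Metric Filter Asymptotics

noncomputable section

/-- The surface `H` of Example 3 in `ℝ⁴` (coordinates `x = p 0`, `y = p 1`, `z = p 2`,
`t = p 3`): `y² - x² = (x² + y² - 2t²)²`, `z = 0`, `|y| ≤ t ≤ 1`. -/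
def SurfaceH : Set (EuclideanSpace ℝ (Fin 4)) :=
  {p | p 1 ^ 2 - p 0 ^ 2 = (p 0 ^ 2 + p 1 ^ 2 - 2 * p 3 ^ 2) ^ 2 ∧
        p 2 = 0 ∧ |p 1| ≤ p 3 ∧ p 3 ≤ 1}

theorem Real.eq_sqrt_one_add_eight_mul_sub_one_div_two_iff {a s : ℝ} (ha : 0 ≤ a) :
    a = (√(1 + 8 * s) - 1) / 2 ↔ a ^ 2 + a = 2 * s := by
  have hroot : a = (√(1 + 8 * s) - 1) / 2 ↔ √(1 + 8 * s) = 2 * a + 1 := by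
    constructor <;> intro h <;> linarith
  rw [hroot, Real.sqrt_eq_iff_mul_self_eq_of_pos (by linarith)]
  constructor <;> intro h <;> linarith

theorem sq_eq_sq_sub_two_mul_sq_and_le_iff {a t : ℝ} (ha : 0 ≤ a) :
    (a ^ 2 = (a ^ 2 - 2 * t ^ 2) ^ 2 ∧ a ≤ t ∧ t ≤ 1) ↔
      (0 ≤ t ∧ t ≤ 1 ∧ a ^ 2 + a = 2 * t ^ 2) := by
  constructor
  · rintro ⟨heq, hat, ht1⟩
    have hsq : a ^ 2 ≤ t ^ 2 := pow_le_pow_left₀ ha hat 2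
    have hroot : a = 2 * t ^ 2 - a ^ 2 := by
      rw [← sq_eq_sq₀ ha (by linarith [sq_nonneg t])]
      linear_combination heq
    exact ⟨ha.trans hat, ht1, by linarith⟩
  · rintro ⟨ht0, ht1, hsum⟩
    refine ⟨by rw [show a ^ 2 - 2 * t ^ 2 = -a by linarith]; ring, ?_, ht1⟩
    nlinarith

theorem Real.one_add_div_two_sub_sq_div_eight_le_sqrt {u : ℝ} (hu : 0 ≤ u) :
    1 + u / 2 - u ^ 2 / 8 ≤ √(1 + u) := by
  set s := √(1 + u)
  have hs : s ^ 2 = 1 + u := Real.sq_sqrt (by linarith)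
  have hs1 : 1 ≤ s := Real.one_le_sqrt.mpr (by linarith)
  have hdefect : 1 + u / 2 - s = (s - 1) ^ 2 / 2 := by linear_combination -hs / 2
  have hstep : s - 1 ≤ u / 2 := by nlinarith
  nlinarith

theorem Real.abs_sqrt_one_add_sub_le {u : ℝ} (hu : 0 ≤ u) :
    |√(1 + u) - (1 + u / 2)| ≤ u ^ 2 / 8 := by
  rw [abs_le]
  constructor
  · linarith [Real.one_add_div_two_sub_sq_div_eight_le_sqrt hu]
  · linarith [Real.sqrt_one_add_le (show -1 ≤ u by linarith), sq_nonneg u]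

theorem abs_sqrt_one_add_eight_mul_sq_sub_le (t : ℝ) :
    |(√(1 + 8 * t ^ 2) - 1) / 2 - 2 * t ^ 2| ≤ 4 * t ^ 4 := by
  have h := Real.abs_sqrt_one_add_sub_le (u := 8 * t ^ 2) (by positivity)
  have hrw : (√(1 + 8 * t ^ 2) - 1) / 2 - 2 * t ^ 2 =
      (√(1 + 8 * t ^ 2) - (1 + 8 * t ^ 2 / 2)) / 2 := by ring
  rw [hrw, abs_div, abs_two]
  linarith

/-- the slice of `H` by `{x = 0}` is the pair of arcs
`y = ±g(t)`, `0 ≤ t ≤ 1`, where `g(t) = (√(1+8t²) - 1)/2`; moreover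
`g(t) = 2t² + O(t⁴)` as `t → 0⁺`, so the two branches of `H` are tangent at the origin. -/
theorem surfaceH_slice_x_eq_zero :
    SurfaceH ∩ {p | p 0 = 0} =
      {p : EuclideanSpace ℝ (Fin 4) | p 0 = 0 ∧ p 2 = 0 ∧ 0 ≤ p 3 ∧ p 3 ≤ 1 ∧
        |p 1| = (Real.sqrt (1 + 8 * p 3 ^ 2) - 1) / 2} ∧
    (fun t : ℝ => (Real.sqrt (1 + 8 * t ^ 2) - 1) / 2 - 2 * t ^ 2)
      =O[nhdsWithin 0 (Set.Ioi (0 : ℝ))] (fun t : ℝ => t ^ 4) := by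
  refine ⟨?_, IsBigO.of_bound 4 (Eventually.of_forall fun t => ?_)⟩
  · ext p
    simp only [SurfaceH, mem_inter_iff, mem_ofPred_eq]
    rw [Real.eq_sqrt_one_add_eight_mul_sub_one_div_two_iff (abs_nonneg _),
      ← sq_eq_sq_sub_two_mul_sq_and_le_iff (abs_nonneg _), sq_abs]
    constructor
    · rintro ⟨⟨heq, hz, hy, ht1⟩, hx⟩
      exact ⟨hx, hz, by simpa [hx] using heq, hy, ht1⟩
    · rintro ⟨hx, hz, heq, hy, ht1⟩
      exact ⟨⟨by simpa [hx] using heq, hz, hy, ht1⟩, hx⟩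
  · rw [Real.norm_eq_abs, Real.norm_eq_abs, abs_of_nonneg (by positivity : (0 : ℝ) ≤ t ^ 4)]
    exact abs_sqrt_one_add_eight_mul_sq_sub_le t
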